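/- Let F be a field, n ≥ 1, ℓ ≥ 1, and let τ_0, …, τ_ℓ ∈ F be distinct with barycentric weights β_k = ∏_{j≠k} 1/(τ_k − τ_j) and Lagrange basis polynomials w_k(z) = β_k ∏_{j≠k}(z − τ_j). Let P_0, …, P_ℓ be invertible n×n matrices over F and P(z) = Σ_{k=0}^ℓ P_k w_k(z). Let L(z) be the n(ℓ+2) × n(ℓ+2) block pencil with block (0,0) = 0, blocks (0,1+i) = −P_{ℓ−i}, blocks (1+i,0) = β_{ℓ−i} I_n, blocks (1+i,1+i) = (z−τ_{ℓ−i}) I_n for 0 ≤ i ≤ ℓ, and other blocks 0. Then there exist unimodular matrix polynomials E(z), F(z) over F[z] of size n(ℓ+2) such that E(z)·L(z)·F(z) = diag(P(z), I_n, …, I_n) (with ℓ+1 identity blocks); that is, L(z) is a linearization of P(z). -/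

import Mathlib

/-!
The lower block rows of `L(z)` are those of `T(z) ⊗ I_n`, where `T(z)` is a scalar arrowhead
matrix whose top row is ours to choose. With `M = ∏ (z - τ_j)` and top row `(1, M - 1, …, M - 1)`,
`det T = M - (M - 1) ∑ w_k = 1`, so `F = T⁻¹ ⊗ I_n` is unimodular and the lower block rows of
`L F` are those of the identity. The first column of `T⁻¹` is `(M, -w_ℓ, …, -w_0)`, which makes
the top-left block of `L F` equal to `∑ w_k P_k = P`; a block-unitriangular `E` clears the rest
of the top block row.
-/

open Polynomial Matrix Finset Lagrange
open scoped Kronecker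

namespace Lagrange

variable {F ι : Type*} [Field F] [DecidableEq ι] {s : Finset ι} {v : ι → F} {i : ι}

theorem basis_eq_C_nodalWeight_mul_nodal_erase :
    Lagrange.basis s v i = C (nodalWeight s v i) * nodal (s.erase i) v := by
  simp_rw [Lagrange.basis, basisDivisor, nodalWeight, prod_mul_distrib, map_prod, nodal]

theorem X_sub_C_mul_basis (hi : i ∈ s) :
    (X - C (v i)) * Lagrange.basis s v i = C (nodalWeight s v i) * nodal s v := by
  rw [basis_eq_C_nodalWeight_mul_nodal_erase, nodal_eq_mul_nodal_erase hi]
  ring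

end Lagrange

@[to_additive]
theorem Fin.prod_univ_sub_eq_prod_range {M : Type*} [CommMonoid M] (ℓ : ℕ) (f : ℕ → M) :
    ∏ i : Fin (ℓ + 1), f (ℓ - i) = ∏ k ∈ range (ℓ + 1), f k := by
  rw [← Fin.prod_univ_eq_prod_range, ← Equiv.prod_comp Fin.revPerm]
  exact prod_congr rfl fun i _ => by rw [Fin.revPerm_apply, Fin.val_rev]; congr 1; omega

namespace Matrix

variable {R : Type*} {m : ℕ}

def arrowhead [Zero R] (a : R) (c b d : Fin m → R) : Matrix (Fin (m + 1)) (Fin (m + 1)) R :=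
  of (Fin.cons (Fin.cons a c) fun i => Fin.cons (b i) (diagonal d i))

theorem arrowhead_mulVec_cons [NonUnitalNonAssocSemiring R] (a : R) (c b d : Fin m → R)
    (x : R) (y : Fin m → R) :
    arrowhead a c b d *ᵥ Fin.cons x y = Fin.cons (a * x + c ⬝ᵥ y) fun i => b i * x + d i * y i := by
  ext i
  cases i using Fin.cases <;>
    simp [arrowhead, mulVec, dotProduct, Fin.sum_univ_succ, diagonal_apply]

theorem arrowhead_eq_submatrix_fromBlocks [Zero R] (a : R) (c b d : Fin m → R) :
    arrowhead a c b d =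
      (fromBlocks (diagonal d) (replicateCol Unit b) (replicateRow Unit c)
        (of fun _ _ => a)).submatrix
        ((finSuccEquiv m).trans (Equiv.optionEquivSumPUnit _))
        ((finSuccEquiv m).trans (Equiv.optionEquivSumPUnit _)) := by
  ext i j
  cases i using Fin.cases <;> cases j using Fin.cases <;> simp [arrowhead]

theorem det_arrowhead [CommRing R] [IsDomain R] (a : R) (c b d : Fin m → R) (hd : ∀ i, d i ≠ 0) :
    (arrowhead a c b d).det = a * ∏ i, d i - ∑ i, c i * b i * ∏ j ∈ univ.erase i, d j := by
  -- Clearing the column `b` by a block-unitriangular factor of determinant `∏ d` avoids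
  -- inverting `diagonal d`; the factor `∏ d` is cancelled at the end.
  set q : Fin m → R := fun i => ∏ j ∈ univ.erase i, d j
  have hq : ∀ i, d i * q i = ∏ j, d j := fun i => mul_prod_erase _ d (mem_univ i)
  have hfactor :
      fromBlocks (diagonal d) (replicateCol Unit b) (replicateRow Unit c) (of fun _ _ => a) *
      fromBlocks 1 (replicateCol Unit fun i => -(b i * q i)) 0 (of fun _ _ => ∏ j, d j) =
      fromBlocks (diagonal d) 0 (replicateRow Unit c)
        (of fun _ _ => a * ∏ i, d i - ∑ i, c i * b i * q i) := by
    rw [fromBlocks_multiply]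
    congr 1
    · simp
    · ext i j
      simp [mul_apply, diagonal_apply, ← hq i]
      ring
    · simp
    · ext
      simp [replicateRow, replicateCol, mul_apply, sum_neg_distrib, mul_assoc]
      ring
  have h := congrArg det hfactor
  rw [det_mul, det_fromBlocks_zero₂₁, det_fromBlocks_zero₁₂, det_one, one_mul,
    det_unique (of fun _ _ => ∏ j, d j), det_unique (of fun _ _ => _), det_diagonal] at h
  rw [arrowhead_eq_submatrix_fromBlocks, det_submatrix_equiv_self]
  simp only [of_apply] at h
  exact mul_right_cancel₀ (prod_ne_zero_iff.mpr fun i _ => hd i) (h.trans (mul_comm _ _))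

end Matrix

section Idempotent

variable {R : Type*} [Ring R] {p : R}

theorem IsIdempotentElem.one_sub_corner_mul_one_add_corner (hp : IsIdempotentElem p) (y : R) :
    (1 - p * y * (1 - p)) * (1 + p * y * (1 - p)) = 1 :=
  calc (1 - p * y * (1 - p)) * (1 + p * y * (1 - p))
      = 1 - p * y * ((1 - p) * p) * y * (1 - p) := by noncomm_ring
    _ = 1 := by rw [hp.one_sub_mul_self]; noncomm_ring

theorem one_sub_corner_mul_eq_of_one_sub_mul_eq {g : R} (hg : (1 - p) * g = 1 - p) :
    (1 - p * g * (1 - p)) * g = p * g * p + (1 - p) :=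
  calc (1 - p * g * (1 - p)) * g = g - p * g * ((1 - p) * g) := by noncomm_ring
    _ = g - p * g * (1 - p) := by rw [hg]
    _ = p * g * p + (1 - p) * g := by noncomm_ring
    _ = p * g * p + (1 - p) := by rw [hg]

end Idempotent

section BlockProj

variable {ι κ R : Type*} [DecidableEq ι] [DecidableEq κ] [Ring R]

def blockProj (i₀ : ι) : Matrix (ι × κ) (ι × κ) R :=
  diagonal fun p => if p.1 = i₀ then 1 else 0

variable [Fintype ι] [Fintype κ]

theorem isIdempotentElem_blockProj (i₀ : ι) :
    IsIdempotentElem (blockProj (κ := κ) (R := R) i₀) := by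
  simp only [IsIdempotentElem, blockProj, diagonal_mul_diagonal]
  congr 1
  ext p
  split_ifs <;> simp

theorem one_sub_blockProj_mul_eq {i₀ : ι} {A B : Matrix (ι × κ) (ι × κ) R}
    (h : ∀ p q, p.1 ≠ i₀ → A p q = B p q) :
    (1 - blockProj i₀) * A = (1 - blockProj i₀) * B := by
  ext p q
  by_cases hp : p.1 = i₀ <;> simp [sub_mul, blockProj, hp, h p q]

theorem blockProj_mul_mul_blockProj_add_one_sub {i₀ : ι} {G : Matrix (ι × κ) (ι × κ) R}
    {P : Matrix κ κ R} (hG : ∀ s t, G (i₀, s) (i₀, t) = P s t) :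
    blockProj i₀ * G * blockProj i₀ + (1 - blockProj i₀) = of fun q r =>
      if q.1 = r.1 then (if q.1 = i₀ then P q.2 r.2 else if q.2 = r.2 then 1 else 0) else 0 := by
  ext ⟨i, s⟩ ⟨j, t⟩
  by_cases hi : i = i₀ <;> by_cases hij : i = j <;> subst_vars <;>
    simp [blockProj, one_apply, diagonal_apply, *, Ne.symm]

end BlockProj

theorem Matrix.exists_det_eq_C_of_mul_eq_one {K ι : Type*} [Field K] [Fintype ι] [DecidableEq ι]
    {A B : Matrix ι ι K[X]} (h : A * B = 1) : ∃ c : K, c ≠ 0 ∧ A.det = C c := by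
  obtain ⟨c, hc, hdet⟩ := Polynomial.isUnit_iff.mp (isUnit_det_of_right_inverse h)
  exact ⟨c, hc.ne_zero, hdet.symm⟩

section LagrangePencil

variable {F : Type*} [Field F]

noncomputable def lagrangePencil (n ℓ : ℕ) (τ β : ℕ → F) (Pv : ℕ → Matrix (Fin n) (Fin n) F) :
    Matrix (Fin (ℓ + 2) × Fin n) (Fin (ℓ + 2) × Fin n) F[X] :=
  of fun p q =>
    if p.1.val = 0 then
      (if q.1.val = 0 then 0 else (-(Pv (ℓ - (q.1.val - 1))).map C) p.2 q.2)
    else if q.1.val = 0 then (if p.2 = q.2 then C (β (ℓ - (p.1.val - 1))) else 0)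
    else if p.1 = q.1 then (if p.2 = q.2 then X - C (τ (ℓ - (p.1.val - 1))) else 0)
    else 0

/-- The matrix `T(z)`: its rows `1, …, ℓ + 1` are the scalar factors of the lower block rows of
`lagrangePencil`. -/
noncomputable def lagrangeCompletion (ℓ : ℕ) (τ β : ℕ → F) :
    Matrix (Fin (ℓ + 2)) (Fin (ℓ + 2)) F[X] :=
  arrowhead 1 (fun _ => nodal (range (ℓ + 1)) τ - 1) (fun i => C (β (ℓ - i)))
    fun i => X - C (τ (ℓ - i))

variable {ℓ : ℕ} {τ β : ℕ → F}

theorem C_mul_prod_erase_eq_basis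
    (hβ : ∀ k ∈ range (ℓ + 1), β k = nodalWeight (range (ℓ + 1)) τ k) (i : Fin (ℓ + 1)) :
    C (β (ℓ - i)) * ∏ j ∈ univ.erase i, (X - C (τ (ℓ - j))) =
      Lagrange.basis (range (ℓ + 1)) τ (ℓ - i) := by
  have hi : ℓ - (i : ℕ) ∈ range (ℓ + 1) := mem_range.mpr (by omega)
  refine mul_left_cancel₀ (X_sub_C_ne_zero (τ (ℓ - i))) ?_
  rw [X_sub_C_mul_basis hi, ← hβ _ hi, mul_left_comm,
    mul_prod_erase _ (fun j : Fin (ℓ + 1) => X - C (τ (ℓ - j))) (mem_univ i),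
    Fin.prod_univ_sub_eq_prod_range ℓ fun k => X - C (τ k), nodal]

theorem det_lagrangeCompletion (hτ : Set.InjOn τ (range (ℓ + 1)))
    (hβ : ∀ k ∈ range (ℓ + 1), β k = nodalWeight (range (ℓ + 1)) τ k) :
    (lagrangeCompletion ℓ τ β).det = 1 := by
  rw [lagrangeCompletion, det_arrowhead _ _ _ _ fun i => X_sub_C_ne_zero _,
    Fin.prod_univ_sub_eq_prod_range ℓ (fun k => X - C (τ k))]
  simp only [mul_assoc, C_mul_prod_erase_eq_basis hβ, ← mul_sum,
    Fin.sum_univ_sub_eq_sum_range ℓ (Lagrange.basis (range (ℓ + 1)) τ),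
    sum_basis hτ nonempty_range_add_one, nodal]
  ring

theorem isUnit_det_lagrangeCompletion (hτ : Set.InjOn τ (range (ℓ + 1)))
    (hβ : ∀ k ∈ range (ℓ + 1), β k = nodalWeight (range (ℓ + 1)) τ k) :
    IsUnit (lagrangeCompletion ℓ τ β).det := by
  simp [det_lagrangeCompletion hτ hβ]

theorem lagrangeCompletion_mulVec (hτ : Set.InjOn τ (range (ℓ + 1)))
    (hβ : ∀ k ∈ range (ℓ + 1), β k = nodalWeight (range (ℓ + 1)) τ k) :
    lagrangeCompletion ℓ τ β *ᵥ
        Fin.cons (nodal (range (ℓ + 1)) τ) (fun i => -Lagrange.basis (range (ℓ + 1)) τ (ℓ - i)) =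
      Pi.single 0 1 := by
  rw [lagrangeCompletion, arrowhead_mulVec_cons]
  ext i
  cases i using Fin.cases with
  | zero =>
    simp only [Fin.cons_zero, dotProduct, mul_neg, sum_neg_distrib, ← mul_sum,
      Fin.sum_univ_sub_eq_sum_range ℓ (Lagrange.basis (range (ℓ + 1)) τ),
      sum_basis hτ nonempty_range_add_one]
    simp
  | succ i =>
    have hi : ℓ - (i : ℕ) ∈ range (ℓ + 1) := mem_range.mpr (by omega)
    simp [X_sub_C_mul_basis hi, hβ _ hi]

theorem lagrangeCompletion_inv_succ_zero (hτ : Set.InjOn τ (range (ℓ + 1)))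
    (hβ : ∀ k ∈ range (ℓ + 1), β k = nodalWeight (range (ℓ + 1)) τ k) (i : Fin (ℓ + 1)) :
    (lagrangeCompletion ℓ τ β)⁻¹ i.succ 0 = -Lagrange.basis (range (ℓ + 1)) τ (ℓ - i) := by
  have h := congrArg ((lagrangeCompletion ℓ τ β)⁻¹ *ᵥ ·) (lagrangeCompletion_mulVec hτ hβ)
  rw [mulVec_mulVec, nonsing_inv_mul _ (isUnit_det_lagrangeCompletion hτ hβ), one_mulVec,
    mulVec_single_one] at h
  simpa using (congrFun h i.succ).symm

theorem lagrangePencil_succ_row {n : ℕ} (Pv : ℕ → Matrix (Fin n) (Fin n) F) (i : Fin (ℓ + 1))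
    (s : Fin n) (q : Fin (ℓ + 2) × Fin n) :
    lagrangePencil n ℓ τ β Pv (i.succ, s) q = (lagrangeCompletion ℓ τ β ⊗ₖ 1) (i.succ, s) q := by
  obtain ⟨c, t⟩ := q
  cases c using Fin.cases <;>
    simp [lagrangePencil, lagrangeCompletion, arrowhead, one_apply, diagonal_apply, ← ite_and,
      and_comm]

theorem lagrangePencil_mul_kronecker_one_apply_zero_zero {n : ℕ}
    (Pv : ℕ → Matrix (Fin n) (Fin n) F) (U : Matrix (Fin (ℓ + 2)) (Fin (ℓ + 2)) F[X])
    (s t : Fin n) :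
    (lagrangePencil n ℓ τ β Pv * (U ⊗ₖ (1 : Matrix (Fin n) (Fin n) F[X]))) (0, s) (0, t) =
      -∑ i : Fin (ℓ + 1), C (Pv (ℓ - i) s t) * U i.succ 0 := by
  simp [mul_apply, Fintype.sum_prod_type, Fin.sum_univ_succ, lagrangePencil, one_apply]

theorem one_sub_blockProj_mul_lagrangePencil_mul_inv_kronecker {n : ℕ}
    (hτ : Set.InjOn τ (range (ℓ + 1)))
    (hβ : ∀ k ∈ range (ℓ + 1), β k = nodalWeight (range (ℓ + 1)) τ k)
    (Pv : ℕ → Matrix (Fin n) (Fin n) F) :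
    (1 - blockProj 0) * (lagrangePencil n ℓ τ β Pv *
        ((lagrangeCompletion ℓ τ β)⁻¹ ⊗ₖ (1 : Matrix (Fin n) (Fin n) F[X]))) =
      1 - blockProj 0 := by
  have hrows : ∀ p q, p.1 ≠ 0 →
      lagrangePencil n ℓ τ β Pv p q = (lagrangeCompletion ℓ τ β ⊗ₖ 1) p q := by
    rintro ⟨r, s⟩ q hr
    obtain ⟨i, rfl⟩ := Fin.exists_succ_eq.mpr hr
    exact lagrangePencil_succ_row Pv i s q
  rw [← mul_assoc, one_sub_blockProj_mul_eq hrows, mul_assoc, ← mul_kronecker_mul,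
    mul_nonsing_inv _ (isUnit_det_lagrangeCompletion hτ hβ), one_mul, one_kronecker_one, mul_one]

theorem lagrangePencil_mul_inv_kronecker_apply_zero_zero {n : ℕ}
    (hτ : Set.InjOn τ (range (ℓ + 1)))
    (hβ : ∀ k ∈ range (ℓ + 1), β k = nodalWeight (range (ℓ + 1)) τ k)
    (Pv : ℕ → Matrix (Fin n) (Fin n) F) (s t : Fin n) :
    (lagrangePencil n ℓ τ β Pv *
        ((lagrangeCompletion ℓ τ β)⁻¹ ⊗ₖ (1 : Matrix (Fin n) (Fin n) F[X]))) (0, s) (0, t) =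
      (∑ k ∈ range (ℓ + 1), Lagrange.basis (range (ℓ + 1)) τ k • (Pv k).map C) s t := by
  rw [lagrangePencil_mul_kronecker_one_apply_zero_zero, Matrix.sum_apply]
  simp only [lagrangeCompletion_inv_succ_zero hτ hβ, mul_neg, sum_neg_distrib, neg_neg]
  rw [Fin.sum_univ_sub_eq_sum_range ℓ fun k => C (Pv k s t) * Lagrange.basis (range (ℓ + 1)) τ k]
  simp [mul_comm]

end LagrangePencil

theorem lagrange_pencil_is_linearization_general
    {F : Type*} [Field F] (n ℓ : ℕ)
    (τ : ℕ → F) (hτ : ∀ j ≤ ℓ, ∀ k ≤ ℓ, j ≠ k → τ j ≠ τ k)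
    (β : ℕ → F)
    (hβ : ∀ k ≤ ℓ, β k = ∏ j ∈ (Finset.range (ℓ + 1)).erase k, (τ k - τ j)⁻¹)
    (Pv : ℕ → Matrix (Fin n) (Fin n) F)
    (P : Matrix (Fin n) (Fin n) (Polynomial F))
    (hP : P = ∑ k ∈ Finset.range (ℓ + 1),
      (C (β k) * ∏ j ∈ (Finset.range (ℓ + 1)).erase k, (X - C (τ j))) •
        (Pv k).map C)
    (L : Matrix (Fin (ℓ + 2) × Fin n) (Fin (ℓ + 2) × Fin n) (Polynomial F))
    (hL : ∀ r c : Fin (ℓ + 2), ∀ s t : Fin n, L (r, s) (c, t) =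
      if r.val = 0 then
        (if c.val = 0 then 0 else (-(Pv (ℓ - (c.val - 1))).map C) s t)
      else if c.val = 0 then (if s = t then C (β (ℓ - (r.val - 1))) else 0)
      else if r = c then (if s = t then X - C (τ (ℓ - (r.val - 1))) else 0)
      else 0) :
    ∃ E Fm : Matrix (Fin (ℓ + 2) × Fin n) (Fin (ℓ + 2) × Fin n) (Polynomial F),
      (∃ c : F, c ≠ 0 ∧ E.det = C c) ∧
      (∃ c : F, c ≠ 0 ∧ Fm.det = C c) ∧
      E * L * Fm = Matrix.of fun q r : Fin (ℓ + 2) × Fin n =>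
        if q.1 = r.1 then
          (if q.1.val = 0 then P q.2 r.2 else if q.2 = r.2 then 1 else 0)
        else 0 := by
  have hτ' : Set.InjOn τ (range (ℓ + 1)) := fun j hj k hk =>
    not_imp_not.mp (hτ j (mem_range_succ_iff.mp hj) k (mem_range_succ_iff.mp hk))
  have hβ' : ∀ k ∈ range (ℓ + 1), β k = nodalWeight (range (ℓ + 1)) τ k :=
    fun k hk => hβ k (mem_range_succ_iff.mp hk)
  have hP' : P = ∑ k ∈ range (ℓ + 1), Lagrange.basis (range (ℓ + 1)) τ k • (Pv k).map C :=
    hP.trans <| sum_congr rfl fun k hk => by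
      rw [basis_eq_C_nodalWeight_mul_nodal_erase, ← hβ' k hk, nodal]
  obtain rfl : L = lagrangePencil n ℓ τ β Pv := Matrix.ext fun p q => hL p.1 q.1 p.2 q.2
  set T := lagrangeCompletion ℓ τ β
  set G := lagrangePencil n ℓ τ β Pv * (T⁻¹ ⊗ₖ (1 : Matrix (Fin n) (Fin n) F[X]))
  refine ⟨1 - blockProj 0 * G * (1 - blockProj 0), T⁻¹ ⊗ₖ 1,
    exists_det_eq_C_of_mul_eq_one
      (IsIdempotentElem.one_sub_corner_mul_one_add_corner (isIdempotentElem_blockProj 0) G),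
    exists_det_eq_C_of_mul_eq_one (B := T ⊗ₖ 1) ?_, ?_⟩
  · rw [← mul_kronecker_mul, nonsing_inv_mul _ (isUnit_det_lagrangeCompletion hτ' hβ'), one_mul,
      one_kronecker_one]
  · rw [mul_assoc, one_sub_corner_mul_eq_of_one_sub_mul_eq
        (one_sub_blockProj_mul_lagrangePencil_mul_inv_kronecker hτ' hβ' Pv),
      blockProj_mul_mul_blockProj_add_one_sub (P := P) fun s t => by
        rw [lagrangePencil_mul_inv_kronecker_apply_zero_zero hτ' hβ', hP']]
    simp only [Fin.val_eq_zero_iff]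

/-- For distinct nodes `τ_0, …, τ_ℓ` with barycentric weights `β_k`,
invertible values `P_0, …, P_ℓ` and `P(z) = Σ P_k w_k(z)`, the Lagrange-basis
companion pencil `L(z)` (blocks encoded on `Fin (ℓ+2) × Fin n`, block index first)
is a linearization of `P(z)`: there exist unimodular matrix polynomials `E(z)`,
`F(z)` with `E(z)·L(z)·F(z) = diag(P(z), I_n, …, I_n)` (`ℓ+1` identity blocks). -/
theorem lagrange_pencil_is_linearization
    {F : Type*} [Field F] (n ℓ : ℕ) (hn : 1 ≤ n) (hℓ : 1 ≤ ℓ)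
    (τ : ℕ → F) (hτ : ∀ j ≤ ℓ, ∀ k ≤ ℓ, j ≠ k → τ j ≠ τ k)
    (β : ℕ → F)
    (hβ : ∀ k ≤ ℓ, β k = ∏ j ∈ (Finset.range (ℓ + 1)).erase k, (τ k - τ j)⁻¹)
    (Pv : ℕ → Matrix (Fin n) (Fin n) F)
    (hPv : ∀ k ≤ ℓ, IsUnit (Pv k))
    (P : Matrix (Fin n) (Fin n) (Polynomial F))
    (hP : P = ∑ k ∈ Finset.range (ℓ + 1),
      (C (β k) * ∏ j ∈ (Finset.range (ℓ + 1)).erase k, (X - C (τ j))) •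
        (Pv k).map C)
    (L : Matrix (Fin (ℓ + 2) × Fin n) (Fin (ℓ + 2) × Fin n) (Polynomial F))
    (hL : ∀ r c : Fin (ℓ + 2), ∀ s t : Fin n, L (r, s) (c, t) =
      if r.val = 0 then
        (if c.val = 0 then 0 else (-(Pv (ℓ - (c.val - 1))).map C) s t)
      else if c.val = 0 then (if s = t then C (β (ℓ - (r.val - 1))) else 0)
      else if r = c then (if s = t then X - C (τ (ℓ - (r.val - 1))) else 0)
      else 0) :
    ∃ E Fm : Matrix (Fin (ℓ + 2) × Fin n) (Fin (ℓ + 2) × Fin n) (Polynomial F),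
      (∃ c : F, c ≠ 0 ∧ E.det = C c) ∧
      (∃ c : F, c ≠ 0 ∧ Fm.det = C c) ∧
      E * L * Fm = Matrix.of fun q r : Fin (ℓ + 2) × Fin n =>
        if q.1 = r.1 then
          (if q.1.val = 0 then P q.2 r.2 else if q.2 = r.2 then 1 else 0)
        else 0 :=
  lagrange_pencil_is_linearization_general n ℓ τ hτ β hβ Pv P hP L hL
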